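/- For n ≥ 1, Q̃_n conj(Q̃_n) + Q̃_{n−1} conj(Q̃_{n−1}) = 3(L_{2n+2} + 2ε L_{2n+3}) as a scalar dual number. -/

import Mathlib

open Quaternion TrivSqZeroExt DualNumber

noncomputable section

/-- The n-th Fibonacci quaternion Q_n = F_n + i F_{n+1} + j F_{n+2} + k F_{n+3}. -/
def fibQ (n : ℕ) : ℍ[ℝ] :=
  ⟨Nat.fib n, Nat.fib (n+1), Nat.fib (n+2), Nat.fib (n+3)⟩

/-- Lucas numbers: L_0 = 2, L_1 = 1. -/
def lucas : ℕ → ℕ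
  | 0 => 2
  | 1 => 1
  | n + 2 => lucas n + lucas (n+1)

/-- The n-th Lucas quaternion K_n = L_n + i L_{n+1} + j L_{n+2} + k L_{n+3}. -/
def lucasQ (n : ℕ) : ℍ[ℝ] :=
  ⟨lucas n, lucas (n+1), lucas (n+2), lucas (n+3)⟩

/-- The n-th dual Fibonacci quaternion Q̃_n = Q_n + ε Q_{n+1}. -/
def dQ (n : ℕ) : DualNumber ℍ[ℝ] := inl (fibQ n) + inl (fibQ (n+1)) * ε

/-- The n-th dual Lucas quaternion K̃_n = K_n + ε K_{n+1}. -/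
def dK (n : ℕ) : DualNumber ℍ[ℝ] := inl (lucasQ n) + inl (lucasQ (n+1)) * ε

/-- Conjugate of the dual Fibonacci quaternion (componentwise quaternion conjugation). -/
def dQconj (n : ℕ) : DualNumber ℍ[ℝ] := inl (star (fibQ n)) + inl (star (fibQ (n+1))) * ε

/-- The dual Fibonacci number F̃_n = F_n + ε F_{n+1} as a scalar dual quaternion. -/
def dF (n : ℕ) : DualNumber ℍ[ℝ] :=
  inl ((Nat.fib n : ℝ) : ℍ[ℝ]) + inl ((Nat.fib (n+1) : ℝ) : ℍ[ℝ]) * ε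

/-- The dual Lucas number L̃_n = L_n + ε L_{n+1} as a scalar dual quaternion. -/
def dL (n : ℕ) : DualNumber ℍ[ℝ] :=
  inl ((lucas n : ℝ) : ℍ[ℝ]) + inl ((lucas (n+1) : ℝ) : ℍ[ℝ]) * ε

def qi : ℍ[ℝ] := ⟨0,1,0,0⟩
def qj : ℍ[ℝ] := ⟨0,0,1,0⟩
def qk : ℍ[ℝ] := ⟨0,0,0,1⟩

/-! Since `Q * star Q' + Q' * star Q = 2 Re (Q * star Q')`, the product `Q̃ₙ * conj Q̃ₙ` is the
real dual number `|Qₙ|² + 2 ε Re (Qₙ * star Qₙ₊₁)`. The identities `F_k² + F_{k+1}² = F_{2k+1}`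
and `F_k F_{k+1} + F_{k+1} F_{k+2} = F_{2k+2}` turn the sums over `n` and `n - 1` of both parts
into sums `F_k + F_{k+2} + F_{k+4} + F_{k+6} = 3 L_{k+3}`. -/

theorem lucas_succ_eq_fib_add_fib (n : ℕ) : lucas (n + 1) = Nat.fib n + Nat.fib (n + 2) := by
  induction n using Nat.twoStepInduction with
  | zero => simp [lucas]
  | one => simp [lucas, Nat.fib_add_two]
  | more n ih₁ ih₂ =>
    rw [lucas, ih₁, ih₂, Nat.fib_add_two (n := n + 2), Nat.fib_add_two (n := n)]
    ring

theorem three_mul_lucas_add_three (k : ℕ) :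
    3 * lucas (k + 3) = Nat.fib k + Nat.fib (k + 2) + Nat.fib (k + 4) + Nat.fib (k + 6) := by
  have hL : lucas (k + 3) = Nat.fib (k + 2) + Nat.fib (k + 4) := lucas_succ_eq_fib_add_fib (k + 2)
  have h₂ : Nat.fib (k + 2) = Nat.fib k + Nat.fib (k + 1) := Nat.fib_add_two
  have h₃ : Nat.fib (k + 3) = Nat.fib (k + 1) + Nat.fib (k + 2) := Nat.fib_add_two
  have h₄ : Nat.fib (k + 4) = Nat.fib (k + 2) + Nat.fib (k + 3) := Nat.fib_add_two
  have h₅ : Nat.fib (k + 5) = Nat.fib (k + 3) + Nat.fib (k + 4) := Nat.fib_add_two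
  have h₆ : Nat.fib (k + 6) = Nat.fib (k + 4) + Nat.fib (k + 5) := Nat.fib_add_two
  omega

theorem DualNumber.inl_add_inl_mul_eps_mul {A : Type*} [Semiring A] (a b c d : A) :
    (inl a + inl b * ε : A[ε]) * (inl c + inl d * ε) =
      inl (a * c) + inl (a * d + b * c) * ε := by
  ext <;> simp

theorem Quaternion.mul_star_add_mul_star {R : Type*} [CommRing R] (a b : ℍ[R]) :
    a * star b + b * star a = ↑(2 * (a * star b).re) := by
  rw [← star_mul_star a b, self_add_star']

theorem Quaternion.inl_add_inl_mul_eps_mul_star {R : Type*} [CommRing R] (a b : ℍ[R]) :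
    (inl a + inl b * ε : ℍ[R][ε]) * (inl (star a) + inl (star b) * ε) =
      inl ((normSq a : R) : ℍ[R]) + inl ((2 * (a * star b).re : R) : ℍ[R]) * ε := by
  rw [DualNumber.inl_add_inl_mul_eps_mul, self_mul_star, mul_star_add_mul_star]

theorem normSq_fibQ (n : ℕ) : normSq (fibQ n) = Nat.fib (2 * n + 1) + Nat.fib (2 * n + 5) := by
  have h₁ := Nat.fib_two_mul_add_one n
  have h₅ : Nat.fib (2 * n + 5) = Nat.fib (n + 3) ^ 2 + Nat.fib (n + 2) ^ 2 :=
    Nat.fib_two_mul_add_one (n + 2)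
  rw [normSq_def', h₁, h₅, fibQ]
  push_cast
  ring

theorem re_fibQ_mul_star_fibQ_succ (n : ℕ) :
    (fibQ n * star (fibQ (n + 1))).re = Nat.fib (2 * n + 2) + Nat.fib (2 * n + 6) := by
  have h₂ : Nat.fib (2 * n + 2) =
      Nat.fib n * Nat.fib (n + 1) + Nat.fib (n + 1) * Nat.fib (n + 2) := by
    rw [← Nat.fib_add]; ring_nf
  have h₆ : Nat.fib (2 * n + 6) =
      Nat.fib (n + 2) * Nat.fib (n + 3) + Nat.fib (n + 3) * Nat.fib (n + 4) := by
    rw [← Nat.fib_add]; ring_nf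
  rw [re_mul, re_star, imI_star, imJ_star, imK_star, h₂, h₆]
  simp only [fibQ]
  push_cast
  ring

theorem normSq_fibQ_succ_add_normSq_fibQ (m : ℕ) :
    normSq (fibQ (m + 1)) + normSq (fibQ m) = 3 * lucas (2 * m + 4) := by
  have h : 3 * lucas (2 * m + 4) = Nat.fib (2 * m + 1) + Nat.fib (2 * (m + 1) + 1) +
      Nat.fib (2 * m + 5) + Nat.fib (2 * (m + 1) + 5) := three_mul_lucas_add_three (2 * m + 1)
  rw [normSq_fibQ, normSq_fibQ]
  norm_cast
  omega

theorem re_fibQ_succ_mul_star_add_re_fibQ_mul_star (m : ℕ) :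
    (fibQ (m + 1) * star (fibQ (m + 2))).re + (fibQ m * star (fibQ (m + 1))).re =
      3 * lucas (2 * m + 5) := by
  have h : 3 * lucas (2 * m + 5) = Nat.fib (2 * m + 2) + Nat.fib (2 * (m + 1) + 2) +
      Nat.fib (2 * m + 6) + Nat.fib (2 * (m + 1) + 6) := three_mul_lucas_add_three (2 * m + 2)
  rw [re_fibQ_mul_star_fibQ_succ, re_fibQ_mul_star_fibQ_succ]
  norm_cast
  omega

theorem dual_fib_norm_sum (n : ℕ) (hn : 1 ≤ n) :
    dQ n * dQconj n + dQ (n-1) * dQconj (n-1) =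
      (3 : ℝ) • (inl ((lucas (2*n+2) : ℝ) : ℍ[ℝ]) +
        inl ((2 * (lucas (2*n+3) : ℝ) : ℍ[ℝ])) * ε) := by
  obtain ⟨m, rfl⟩ := Nat.exists_eq_add_of_le' hn
  have hre := normSq_fibQ_succ_add_normSq_fibQ m
  have hdu := re_fibQ_succ_mul_star_add_re_fibQ_mul_star m
  rw [Nat.add_sub_cancel, dQ, dQconj, dQ, dQconj, inl_add_inl_mul_eps_mul_star,
    inl_add_inl_mul_eps_mul_star, show 2 * (m + 1) + 2 = 2 * m + 4 by ring,
    show 2 * (m + 1) + 3 = 2 * m + 5 by ring, show m + 1 + 1 = m + 2 by ring]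
  refine TrivSqZeroExt.ext ?_ ?_
  · simp only [fst_add, fst_mul, fst_inl, fst_eps, mul_zero, add_zero, fst_smul]
    rw [← coe_add, hre, ← coe_smul, smul_eq_mul]
  · simp only [snd_add, DualNumber.snd_mul, fst_inl, fst_eps, snd_inl, snd_eps, mul_zero, zero_add,
      add_zero, snd_smul, mul_one]
    rw [← coe_add, ← mul_add, hdu, mul_left_comm, ← smul_eq_mul 3, coe_smul]
    push_cast
    rfl
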